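/- arXiv:2305.03402 — 3 statements merged into one kernel-verified Lean document; each statement's English description precedes it below -/
import Mathlib

section
/- Let W_d ⊂ W(0,T) be a finite dimensional subspace, y ∈ W(0,T) the solution of b(y,v) = l(v) for all v ∈ W(0,T), and y_d ∈ W_d the solution of b(y_d,v_d) = l(v_d) for all v_d ∈ W_d. Then there is a constant c > 0, independent of the discretization, such that the error e := y − y_d satisfies the a priori estimate ‖e‖_{W(0,T)} + ‖e(T)‖_H ≤ c · inf_{v_d ∈ W_d} ‖y − v_d‖_{W(0,T)}. -/
/-!
Abstract setup for the least-squares space-time formulation of the abstract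
parabolic (heat) equation, following Hinze–Kahle.

* `V, H` are separable real Hilbert spaces forming a Gelfand triple
  `V ↪ H ≡ H* ↪ V*` via the embedding `ι : V →L[ℝ] H`.
* `A : V → V*` is linear, bounded, selfadjoint, coercive and boundedly
  invertible with inverse the Riesz lift `R : V* → V`, i.e.
  `⟨l,v⟩_{V*,V} = (R l, v)_V`.  The dual inner product is
  `(l,k)_{V*} = (R l, R k)_V`.
* `W` is the space `W(0,T) = {v ∈ L²(0,T;V) : vₜ ∈ L²(0,T;V*)}`; an element
  `w : W` has an `L²(0,T;V)`-representative `val w : ℝ → V` (whose composition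
  with `ι` is the continuous `H`-valued representative) and a weak time
  derivative `dt w : ℝ → V*`.  The `W(0,T)`-inner product is
  `(u,w) = ∫₀ᵀ (uₜ,wₜ)_{V*} + ∫₀ᵀ (u,w)_V`, the embedding
  `W(0,T) ↪ C([0,T];H)` is continuous, and the fundamental
  integration-by-parts identity
  `‖w(T)‖²_H - ‖w(0)‖²_H = 2∫₀ᵀ ⟨wₜ,w⟩` holds.
-/

open MeasureTheory
open scoped RealInnerProductSpace

noncomputable section

structure SpaceTimeSetup (V H W : Type*)
    [NormedAddCommGroup V] [InnerProductSpace ℝ V] [CompleteSpace V]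
    [NormedAddCommGroup H] [InnerProductSpace ℝ H] [CompleteSpace H]
    [NormedAddCommGroup W] [InnerProductSpace ℝ W] [CompleteSpace W] where
  /-- the final time `T > 0` -/
  T : ℝ
  T_pos : 0 < T
  /-- the embedding `V ↪ H` of the Gelfand triple -/
  ι : V →L[ℝ] H
  ι_inj : Function.Injective ι
  /-- the operator `A : V → V*` -/
  A : V →L[ℝ] StrongDual ℝ V
  /-- the Riesz lift `R = A⁻¹ : V* → V` -/
  R : StrongDual ℝ V →L[ℝ] V
  /-- `⟨l,v⟩_{V*,V} = (R l, v)_V` -/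
  riesz : ∀ (l : StrongDual ℝ V) (v : V), l v = ⟪R l, v⟫
  R_A : ∀ v : V, R (A v) = v
  A_R : ∀ l : StrongDual ℝ V, A (R l) = l
  /-- the `L²(0,T;V)`-representative of an element of `W(0,T)` -/
  val : W →ₗ[ℝ] (ℝ → V)
  /-- the weak time derivative, an element of `L²(0,T;V*)` -/
  dt : W →ₗ[ℝ] (ℝ → StrongDual ℝ V)
  int_val : ∀ u w : W, IntervalIntegrable (fun t => ⟪val u t, val w t⟫) volume 0 T
  int_dt : ∀ u w : W,
    IntervalIntegrable (fun t => ⟪R (dt u t), R (dt w t)⟫) volume 0 T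
  int_mix : ∀ u w : W, IntervalIntegrable (fun t => dt u t (val w t)) volume 0 T
  /-- the canonical inner product of `W(0,T)` -/
  inner_def : ∀ u w : W, ⟪u, w⟫ =
    (∫ t in (0:ℝ)..T, ⟪R (dt u t), R (dt w t)⟫) +
      ∫ t in (0:ℝ)..T, ⟪val u t, val w t⟫
  /-- the continuous embedding `W(0,T) ↪ C([0,T];H)` -/
  emb : ∃ C > 0, ∀ (w : W) (t : ℝ), t ∈ Set.Icc 0 T → ‖ι (val w t)‖ ≤ C * ‖w‖
  /-- `‖w(T)‖²_H - ‖w(0)‖²_H = 2 ∫₀ᵀ ⟨wₜ, w⟩_{V*,V}` -/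
  ftc : ∀ w : W, ‖ι (val w T)‖ ^ 2 - ‖ι (val w 0)‖ ^ 2 =
    2 * ∫ t in (0:ℝ)..T, dt w t (val w t)

variable {V H W : Type*}
    [NormedAddCommGroup V] [InnerProductSpace ℝ V] [CompleteSpace V]
    [NormedAddCommGroup H] [InnerProductSpace ℝ H] [CompleteSpace H]
    [NormedAddCommGroup W] [InnerProductSpace ℝ W] [CompleteSpace W]

/-- the least-squares bilinear form
`b(v,w) = ∫₀ᵀ (vₜ + A v, wₜ + A w)_{V*} + (v(0), w(0))_H` -/
def SpaceTimeSetup.b (S : SpaceTimeSetup V H W) (v w : W) : ℝ :=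
  (∫ t in (0:ℝ)..S.T,
      ⟪S.R (S.dt v t + S.A (S.val v t)), S.R (S.dt w t + S.A (S.val w t))⟫) +
    ⟪S.ι (S.val v 0), S.ι (S.val w 0)⟫

/-- the right-hand side linear form
`l(v) = ∫₀ᵀ (f, vₜ + A v)_{V*} + (y₀, v(0))_H` -/
def SpaceTimeSetup.lform (S : SpaceTimeSetup V H W)
    (f : ℝ → StrongDual ℝ V) (y₀ : H) (v : W) : ℝ :=
  (∫ t in (0:ℝ)..S.T, ⟪S.R (f t), S.R (S.dt v t + S.A (S.val v t))⟫) +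
    ⟪y₀, S.ι (S.val v 0)⟫

/-!
Since `R A = id` and `⟨l,v⟩ = (R l, v)_V`, expanding `(vₜ + Av, vₜ + Av)_{V*}` gives
`‖vₜ‖²_{V*} + ‖v‖²_V + 2⟨vₜ,v⟩`, and integration by parts turns `2∫₀ᵀ⟨vₜ,v⟩` into
`‖v(T)‖²_H - ‖v(0)‖²_H`; hence `b(v,v) = ‖v‖²_{W(0,T)} + ‖v(T)‖²_H`. So `b` is an inner
product whose norm is at least `(‖v‖_{W(0,T)} + ‖v(T)‖_H) / √2` and, by the embedding
`W(0,T) ↪ C([0,T];H)` with constant `C`, at most `√(1 + C²) ‖v‖_{W(0,T)}`. The Galerkin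
error `y - y_d` is `b`-orthogonal to `W_d`, so by Pythagoras it minimizes the `b`-norm of
`y - v_d` over `v_d ∈ W_d`.
-/

namespace LinearMap.BilinForm

variable {R M : Type*} [CommRing R] [PartialOrder R] [IsOrderedAddMonoid R]
  [AddCommGroup M] [Module R M]

theorem apply_self_le_apply_add_self (B : LinearMap.BilinForm R M) {x y : M} (hxy : B x y = 0)
    (hyx : B y x = 0) (hy : 0 ≤ B y y) : B x x ≤ B (x + y) (x + y) := by
  simpa [hxy, hyx] using hy

theorem apply_sub_self_le_of_galerkin (B : LinearMap.BilinForm R M) (hB : B.IsSymm)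
    (hpos : ∀ x, 0 ≤ B x x) {U : Submodule R M} {x xU u : M} (hxU : xU ∈ U)
    (hgal : ∀ v ∈ U, B x v = B xU v) (hu : u ∈ U) :
    B (x - xU) (x - xU) ≤ B (x - u) (x - u) := by
  have horth : B (x - xU) (xU - u) = 0 := by
    rw [map_sub₂, hgal _ (U.sub_mem hxU hu), sub_self]
  have hsplit : x - u = (x - xU) + (xU - u) := by abel
  rw [hsplit]
  exact B.apply_self_le_apply_add_self horth (hB.eq_iff.1 horth) (hpos _)

end LinearMap.BilinForm

namespace SpaceTimeSetup

variable (S : SpaceTimeSetup V H W)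

theorem inner_R_add_A (l k : StrongDual ℝ V) (v w : V) :
    ⟪S.R (l + S.A v), S.R (k + S.A w)⟫ = ⟪S.R l, S.R k⟫ + l w + k v + ⟪v, w⟫ := by
  rw [map_add, map_add, S.R_A, S.R_A, inner_add_left, inner_add_right, inner_add_right,
    S.riesz l w, S.riesz k v, real_inner_comm v]
  ring

theorem b_eq_inner_add (v w : W) :
    S.b v w = ⟪v, w⟫ + (∫ t in (0:ℝ)..S.T, S.dt v t (S.val w t)) +
      (∫ t in (0:ℝ)..S.T, S.dt w t (S.val v t)) + ⟪S.ι (S.val v 0), S.ι (S.val w 0)⟫ := by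
  rw [b, S.inner_def]
  simp only [inner_R_add_A]
  rw [intervalIntegral.integral_add (((S.int_dt v w).add (S.int_mix v w)).add (S.int_mix w v))
      (S.int_val v w),
    intervalIntegral.integral_add ((S.int_dt v w).add (S.int_mix v w)) (S.int_mix w v),
    intervalIntegral.integral_add (S.int_dt v w) (S.int_mix v w)]
  ring

theorem b_self (v : W) : S.b v v = ‖v‖ ^ 2 + ‖S.ι (S.val v S.T)‖ ^ 2 := by
  rw [b_eq_inner_add, real_inner_self_eq_norm_sq, real_inner_self_eq_norm_sq]
  linarith [S.ftc v]

def timePairing : LinearMap.BilinForm ℝ W :=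
  LinearMap.mk₂ ℝ (fun v w => ∫ t in (0:ℝ)..S.T, S.dt v t (S.val w t))
    (fun u v w => by
      simp only [map_add, Pi.add_apply, add_apply]
      exact intervalIntegral.integral_add (S.int_mix u w) (S.int_mix v w))
    (fun c v w => by
      simp only [map_smul, Pi.smul_apply, smul_apply, smul_eq_mul]
      exact intervalIntegral.integral_const_mul _ _)
    (fun v u w => by
      simp only [map_add, Pi.add_apply]
      exact intervalIntegral.integral_add (S.int_mix v u) (S.int_mix v w))
    (fun c v w => by
      simp only [map_smul, Pi.smul_apply, smul_eq_mul]
      exact intervalIntegral.integral_const_mul _ _)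

def initialValue : W →ₗ[ℝ] H := S.ι.toLinearMap ∘ₗ LinearMap.proj 0 ∘ₗ S.val

def bilinForm : LinearMap.BilinForm ℝ W :=
  innerₗ W + S.timePairing + S.timePairing.flip +
    (innerₗ H).compl₁₂ S.initialValue S.initialValue

theorem bilinForm_apply (v w : W) : S.bilinForm v w = S.b v w := by
  rw [b_eq_inner_add]; rfl

theorem bilinForm_isSymm : S.bilinForm.IsSymm :=
  ⟨fun v w => by
    rw [bilinForm_apply, bilinForm_apply, b_eq_inner_add, b_eq_inner_add, real_inner_comm v,
      real_inner_comm (S.ι _)]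
    ring⟩

theorem bilinForm_apply_self_nonneg (v : W) : 0 ≤ S.bilinForm v v := by
  rw [bilinForm_apply, b_self]; positivity

theorem b_self_le {C : ℝ} {v : W} (hv : ‖S.ι (S.val v S.T)‖ ≤ C * ‖v‖) :
    S.b v v ≤ (1 + C ^ 2) * ‖v‖ ^ 2 := by
  have hsq : ‖S.ι (S.val v S.T)‖ ^ 2 ≤ C ^ 2 * ‖v‖ ^ 2 := by
    rw [← mul_pow]; exact pow_le_pow_left₀ (norm_nonneg _) hv 2
  rw [b_self]
  linarith

theorem norm_add_norm_val_T_le_sqrt (v : W) :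
    ‖v‖ + ‖S.ι (S.val v S.T)‖ ≤ √(2 * S.b v v) := by
  rw [b_self]
  exact Real.le_sqrt_of_sq_le (add_sq_le ..)

end SpaceTimeSetup

/-- a priori estimate: there is a constant `c > 0`,
independent of the discretization, such that for every finite dimensional
subspace `W_d ⊂ W(0,T)`, the solution `y` of `b(y,v) = l(v)` on `W(0,T)`
and the Galerkin solution `y_d ∈ W_d` satisfy
`‖e‖_{W(0,T)} + ‖e(T)‖_H ≤ c · inf_{v_d ∈ W_d} ‖y - v_d‖_{W(0,T)}`
for the error `e = y - y_d`. -/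
theorem apriori_estimate (S : SpaceTimeSetup V H W)
    (f : ℝ → StrongDual ℝ V) (y₀ : H) :
    ∃ c > 0, ∀ Wd : Submodule ℝ W, FiniteDimensional ℝ Wd →
      ∀ y yd : W, (∀ v : W, S.b y v = S.lform f y₀ v) →
        yd ∈ Wd → (∀ vd ∈ Wd, S.b yd vd = S.lform f y₀ vd) →
        ‖y - yd‖ + ‖S.ι (S.val (y - yd) S.T)‖ ≤
          c * ⨅ vd : Wd, ‖y - (vd : W)‖ := by
  obtain ⟨C, -, hC⟩ := S.emb
  refine ⟨√(2 * (1 + C ^ 2)), by positivity, fun Wd _ y yd hy hyd_mem hyd => ?_⟩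
  rw [Real.mul_iInf_of_nonneg (Real.sqrt_nonneg _)]
  refine le_ciInf fun vd => ?_
  have hgalerkin : S.b (y - yd) (y - yd) ≤ S.b (y - vd) (y - vd) := by
    simpa only [S.bilinForm_apply] using
      S.bilinForm.apply_sub_self_le_of_galerkin S.bilinForm_isSymm
        S.bilinForm_apply_self_nonneg hyd_mem
        (fun u hu => by rw [S.bilinForm_apply, S.bilinForm_apply, hy, hyd u hu]) vd.2
  have hT : S.T ∈ Set.Icc 0 S.T := ⟨S.T_pos.le, le_rfl⟩
  calc ‖y - yd‖ + ‖S.ι (S.val (y - yd) S.T)‖ ≤ √(2 * S.b (y - yd) (y - yd)) :=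
        S.norm_add_norm_val_T_le_sqrt _
    _ ≤ √(2 * ((1 + C ^ 2) * ‖y - vd‖ ^ 2)) := by
        gcongr; exact hgalerkin.trans (S.b_self_le (hC _ _ hT))
    _ = √(2 * (1 + C ^ 2)) * ‖y - vd‖ := by
        rw [← mul_assoc, Real.sqrt_mul (by positivity), Real.sqrt_sq (norm_nonneg _)]
end
end

section
/- Let A(μ) : V → V* be the family of operators associated with the uniformly continuous and uniformly coercive family of inner products a(μ;·,·) on V via a(μ;u,v) = ⟨A(μ)u,v⟩_{V*,V}. Then the parameter-dependent bilinear form b(μ;v,w) := ∫₀ᵀ (v_t + A(μ)v, w_t + A(μ)w)_{V*} + (v(0),w(0))_H is uniformly continuous and uniformly coercive on W(0,T) with respect to μ, i.e. there exist constants independent of μ bounding b(μ;·,·) from above and providing a coercivity lower bound. -/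
/-!
Abstract setup for the least-squares space-time formulation of the abstract
parabolic (heat) equation, following Hinze–Kahle.

* `V, H` are separable real Hilbert spaces forming a Gelfand triple
  `V ↪ H ≡ H* ↪ V*` via the embedding `ι : V →L[ℝ] H`.
* `A : V → V*` is linear, bounded, selfadjoint, coercive and boundedly
  invertible with inverse the Riesz lift `R : V* → V`, i.e.
  `⟨l,v⟩_{V*,V} = (R l, v)_V`.  The dual inner product is
  `(l,k)_{V*} = (R l, R k)_V`.
* `W` is the space `W(0,T) = {v ∈ L²(0,T;V) : vₜ ∈ L²(0,T;V*)}`; an element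
  `w : W` has an `L²(0,T;V)`-representative `val w : ℝ → V` (whose composition
  with `ι` is the continuous `H`-valued representative) and a weak time
  derivative `dt w : ℝ → V*`.  The `W(0,T)`-inner product is
  `(u,w) = ∫₀ᵀ (uₜ,wₜ)_{V*} + ∫₀ᵀ (u,w)_V`, the embedding
  `W(0,T) ↪ C([0,T];H)` is continuous, and the fundamental
  integration-by-parts identity
  `‖w(T)‖²_H - ‖w(0)‖²_H = 2∫₀ᵀ ⟨wₜ,w⟩` holds.
-/

open MeasureTheory
open scoped RealInnerProductSpace

noncomputable section

variable {V H W : Type*}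
    [NormedAddCommGroup V] [InnerProductSpace ℝ V] [CompleteSpace V]
    [NormedAddCommGroup H] [InnerProductSpace ℝ H] [CompleteSpace H]
    [NormedAddCommGroup W] [InnerProductSpace ℝ W] [CompleteSpace W]

/-- the parameter-dependent least-squares bilinear form
`b(μ;v,w) = ∫₀ᵀ (vₜ + A(μ) v, wₜ + A(μ) w)_{V*} + (v(0), w(0))_H`,
for an operator `A' = A(μ)`. -/
def SpaceTimeSetup.bmu (S : SpaceTimeSetup V H W)
    (A' : V →L[ℝ] StrongDual ℝ V) (v w : W) : ℝ :=
  (∫ t in (0:ℝ)..S.T,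
      ⟪S.R (S.dt v t + A' (S.val v t)), S.R (S.dt w t + A' (S.val w t))⟫) +
    ⟪S.ι (S.val v 0), S.ι (S.val w 0)⟫


/-!
Write `r v = R (vₜ + A' v)`, so that `b(v,w) = ∫₀ᵀ ⟪r v, r w⟫_V + ⟪v(0), w(0)⟫_H`, and note that
`R` is an isometry `V* → V`. For continuity, `‖r v‖² ≤ 2‖R vₜ‖² + 2cs²‖v‖²` and the embedding
`W(0,T) ↪ C([0,T];H)` bound the diagonal `b(v,v) ≤ C‖v‖²`; since `b` is a positive semidefinite
symmetric bilinear form, Cauchy–Schwarz turns this into `|b(v,w)| ≤ C‖v‖‖w‖`. For coercivity,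
`0 ≤ ‖r v - cc v‖²` and `⟪r v, v⟫ = ⟨vₜ, v⟩ + a(v,v) ≥ ⟨vₜ, v⟩ + cc‖v‖²` give
`‖r v‖² ≥ cc²‖v‖² + 2cc⟨vₜ, v⟩`; integrating and using `2∫₀ᵀ⟨vₜ, v⟩ = ‖v(T)‖² - ‖v(0)‖²` bounds
`cc²∫₀ᵀ‖v‖²` by `∫₀ᵀ‖r v‖² + cc‖v(0)‖²`, and `‖R vₜ‖² ≤ 2‖r v‖² + 2cs²‖v‖²` then bounds the
whole `W(0,T)`-norm.
-/

lemma norm_add_sq_le {E : Type*} [SeminormedAddCommGroup E] (x y : E) :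
    ‖x + y‖ ^ 2 ≤ 2 * ‖x‖ ^ 2 + 2 * ‖y‖ ^ 2 :=
  (pow_le_pow_left₀ (norm_nonneg _) (norm_add_le x y) 2).trans (add_sq_le.trans_eq (by ring))

lemma norm_sub_sq_le {E : Type*} [SeminormedAddCommGroup E] (x y : E) :
    ‖x - y‖ ^ 2 ≤ 2 * ‖x‖ ^ 2 + 2 * ‖y‖ ^ 2 := by
  simpa only [sub_eq_add_neg, norm_neg] using norm_add_sq_le x (-y)

lemma LinearMap.BilinForm.abs_apply_le_of_apply_self_le {M : Type*} [SeminormedAddCommGroup M]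
    [Module ℝ M] (B : LinearMap.BilinForm ℝ M) (hs : ∀ x, 0 ≤ B x x) (hB : LinearMap.IsSymm B)
    {C : ℝ} (hC : 0 ≤ C) (hle : ∀ x, B x x ≤ C * ‖x‖ ^ 2) (x y : M) :
    |B x y| ≤ C * ‖x‖ * ‖y‖ := by
  refine abs_le_of_sq_le_sq ?_ (by positivity)
  calc B x y ^ 2 ≤ B x x * B y y := B.apply_sq_le_of_symm hs hB x y
    _ ≤ (C * ‖x‖ ^ 2) * (C * ‖y‖ ^ 2) := mul_le_mul (hle x) (hle y) (hs y) (by positivity)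
    _ = (C * ‖x‖ * ‖y‖) ^ 2 := by ring

namespace intervalIntegral

variable {a b c d : ℝ} {f g h : ℝ → ℝ}

lemma integral_le_const_mul_add_const_mul (hab : a ≤ b) (hf : IntervalIntegrable f volume a b)
    (hg : IntervalIntegrable g volume a b) (hh : IntervalIntegrable h volume a b)
    (hle : ∀ t ∈ Set.Icc a b, f t ≤ c * g t + d * h t) :
    ∫ t in a..b, f t ≤ c * (∫ t in a..b, g t) + d * ∫ t in a..b, h t := by
  rw [← integral_const_mul, ← integral_const_mul, ← integral_add (hg.const_mul c) (hh.const_mul d)]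
  exact integral_mono_on hab hf ((hg.const_mul c).add (hh.const_mul d)) hle

lemma const_mul_add_const_mul_le_integral (hab : a ≤ b) (hf : IntervalIntegrable f volume a b)
    (hg : IntervalIntegrable g volume a b) (hh : IntervalIntegrable h volume a b)
    (hle : ∀ t ∈ Set.Icc a b, c * g t + d * h t ≤ f t) :
    c * (∫ t in a..b, g t) + d * ∫ t in a..b, h t ≤ ∫ t in a..b, f t := by
  rw [← integral_const_mul, ← integral_const_mul, ← integral_add (hg.const_mul c) (hh.const_mul d)]
  exact integral_mono_on hab ((hg.const_mul c).add (hh.const_mul d)) hf hle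

end intervalIntegral

namespace LinearMap

variable {M E : Type*} [AddCommGroup M] [Module ℝ M]
  [NormedAddCommGroup E] [InnerProductSpace ℝ E]

def intervalIntegralInnerForm (L : M →ₗ[ℝ] ℝ → E) (a b : ℝ)
    (hL : ∀ u w, IntervalIntegrable (fun t => ⟪L u t, L w t⟫) volume a b) :
    LinearMap.BilinForm ℝ M :=
  LinearMap.mk₂ ℝ (fun u w => ∫ t in a..b, ⟪L u t, L w t⟫)
    (fun u₁ u₂ w => by
      simp only [map_add, Pi.add_apply, inner_add_left]
      exact intervalIntegral.integral_add (hL u₁ w) (hL u₂ w))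
    (fun c u w => by
      simp only [map_smul, Pi.smul_apply, real_inner_smul_left, smul_eq_mul]
      exact intervalIntegral.integral_const_mul c _)
    (fun u w₁ w₂ => by
      simp only [map_add, Pi.add_apply, inner_add_right]
      exact intervalIntegral.integral_add (hL u w₁) (hL u w₂))
    (fun c u w => by
      simp only [map_smul, Pi.smul_apply, real_inner_smul_right, smul_eq_mul]
      exact intervalIntegral.integral_const_mul c _)

end LinearMap

namespace SpaceTimeSetup

variable (S : SpaceTimeSetup V H W)

lemma norm_R (l : StrongDual ℝ V) : ‖S.R l‖ = ‖l‖ := by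
  refine le_antisymm ?_ (l.opNorm_le_bound (norm_nonneg _) fun v => ?_)
  · have h : ‖S.R l‖ * ‖S.R l‖ ≤ ‖l‖ * ‖S.R l‖ := by
      rw [← real_inner_self_eq_norm_mul_norm, ← S.riesz]
      exact (Real.le_norm_self _).trans (l.le_opNorm _)
    nlinarith [norm_nonneg l, norm_nonneg (S.R l)]
  · rw [S.riesz, Real.norm_eq_abs]
    exact abs_real_inner_le_norm _ _

lemma integral_norm_sq_nonneg {E : Type*} [SeminormedAddCommGroup E] (f : ℝ → E) :
    0 ≤ ∫ t in (0:ℝ)..S.T, ‖f t‖ ^ 2 :=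
  intervalIntegral.integral_nonneg S.T_pos.le fun _ _ => sq_nonneg _

lemma norm_sq_eq (v : W) :
    ‖v‖ ^ 2 = (∫ t in (0:ℝ)..S.T, ‖S.R (S.dt v t)‖ ^ 2) + ∫ t in (0:ℝ)..S.T, ‖S.val v t‖ ^ 2 := by
  simp only [← real_inner_self_eq_norm_sq, S.inner_def]

lemma intervalIntegrable_norm_R_dt_sq (v : W) :
    IntervalIntegrable (fun t => ‖S.R (S.dt v t)‖ ^ 2) volume 0 S.T := by
  simpa only [real_inner_self_eq_norm_sq] using S.int_dt v v

lemma intervalIntegrable_norm_val_sq (v : W) :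
    IntervalIntegrable (fun t => ‖S.val v t‖ ^ 2) volume 0 S.T := by
  simpa only [real_inner_self_eq_norm_sq] using S.int_val v v

def residual (A' : V →L[ℝ] StrongDual ℝ V) : W →ₗ[ℝ] ℝ → V where
  toFun v t := S.R (S.dt v t + A' (S.val v t))
  map_add' v w := by ext t; simp only [map_add, Pi.add_apply]; abel
  map_smul' c v := by ext t; simp

lemma residual_apply (A' : V →L[ℝ] StrongDual ℝ V) (v : W) (t : ℝ) :
    S.residual A' v t = S.R (S.dt v t) + S.R (A' (S.val v t)) :=
  map_add S.R _ _

def bmuForm (A' : V →L[ℝ] StrongDual ℝ V)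
    (hint : ∀ u w, IntervalIntegrable (fun t => ⟪S.residual A' u t, S.residual A' w t⟫)
      volume 0 S.T) : LinearMap.BilinForm ℝ W :=
  (S.residual A').intervalIntegralInnerForm 0 S.T hint +
    (innerₗ H).compl₁₂ S.initialValue S.initialValue

lemma bmu_eq (A' : V →L[ℝ] StrongDual ℝ V) (v w : W) :
    S.bmu A' v w = (∫ t in (0:ℝ)..S.T, ⟪S.residual A' v t, S.residual A' w t⟫) +
      ⟪S.initialValue v, S.initialValue w⟫ := rfl

lemma bmu_self_eq (A' : V →L[ℝ] StrongDual ℝ V) (v : W) :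
    S.bmu A' v v = (∫ t in (0:ℝ)..S.T, ‖S.residual A' v t‖ ^ 2) + ‖S.initialValue v‖ ^ 2 := by
  simp only [bmu_eq, real_inner_self_eq_norm_sq]

lemma bmu_comm (A' : V →L[ℝ] StrongDual ℝ V) (v w : W) : S.bmu A' v w = S.bmu A' w v := by
  simp only [bmu_eq, real_inner_comm]

lemma bmu_self_nonneg (A' : V →L[ℝ] StrongDual ℝ V) (v : W) : 0 ≤ S.bmu A' v v := by
  rw [bmu_self_eq]
  have := S.integral_norm_sq_nonneg (S.residual A' v)
  positivity

variable {A' : V →L[ℝ] StrongDual ℝ V} {cs cc : ℝ}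
  (hint : ∀ u w, IntervalIntegrable (fun t => ⟪S.residual A' u t, S.residual A' w t⟫) volume 0 S.T)

include hint in
lemma intervalIntegrable_norm_residual_sq (v : W) :
    IntervalIntegrable (fun t => ‖S.residual A' v t‖ ^ 2) volume 0 S.T := by
  simpa only [real_inner_self_eq_norm_sq] using hint v v

lemma bmuForm_isSymm : LinearMap.IsSymm (S.bmuForm A' hint) :=
  ⟨S.bmu_comm A'⟩

section Continuity

variable (hA : ‖A'‖ ≤ cs)
include hA

lemma norm_R_apply_sq_le (u : V) : ‖S.R (A' u)‖ ^ 2 ≤ cs ^ 2 * ‖u‖ ^ 2 := by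
  rw [S.norm_R, ← mul_pow]
  exact pow_le_pow_left₀ (norm_nonneg _) (A'.le_of_opNorm_le hA u) 2

lemma norm_residual_sq_le (v : W) (t : ℝ) :
    ‖S.residual A' v t‖ ^ 2 ≤ 2 * ‖S.R (S.dt v t)‖ ^ 2 + 2 * cs ^ 2 * ‖S.val v t‖ ^ 2 := by
  rw [S.residual_apply]
  linarith [norm_add_sq_le (S.R (S.dt v t)) (S.R (A' (S.val v t))),
    S.norm_R_apply_sq_le hA (S.val v t)]

lemma norm_R_dt_sq_le (v : W) (t : ℝ) :
    ‖S.R (S.dt v t)‖ ^ 2 ≤ 2 * ‖S.residual A' v t‖ ^ 2 + 2 * cs ^ 2 * ‖S.val v t‖ ^ 2 := by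
  have hsplit : S.R (S.dt v t) = S.residual A' v t - S.R (A' (S.val v t)) := by
    rw [S.residual_apply, add_sub_cancel_right]
  rw [hsplit]
  linarith [norm_sub_sq_le (S.residual A' v t) (S.R (A' (S.val v t))),
    S.norm_R_apply_sq_le hA (S.val v t)]

include hint in
lemma norm_sq_le_integral_residual (v : W) :
    ‖v‖ ^ 2 ≤ 2 * (∫ t in (0:ℝ)..S.T, ‖S.residual A' v t‖ ^ 2) +
      (2 * cs ^ 2 + 1) * ∫ t in (0:ℝ)..S.T, ‖S.val v t‖ ^ 2 := by
  have hdt := intervalIntegral.integral_le_const_mul_add_const_mul S.T_pos.le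
    (S.intervalIntegrable_norm_R_dt_sq v) (S.intervalIntegrable_norm_residual_sq hint v)
    (S.intervalIntegrable_norm_val_sq v) fun t _ => S.norm_R_dt_sq_le hA v t
  linarith [S.norm_sq_eq v]

include hint in
lemma bmu_self_le {Ce : ℝ} (hCe : ∀ w, ‖S.initialValue w‖ ≤ Ce * ‖w‖) (v : W) :
    S.bmu A' v v ≤ (2 + 2 * cs ^ 2 + Ce ^ 2) * ‖v‖ ^ 2 := by
  have hres := intervalIntegral.integral_le_const_mul_add_const_mul S.T_pos.le
    (S.intervalIntegrable_norm_residual_sq hint v) (S.intervalIntegrable_norm_R_dt_sq v)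
    (S.intervalIntegrable_norm_val_sq v) fun t _ => S.norm_residual_sq_le hA v t
  have hinit : ‖S.initialValue v‖ ^ 2 ≤ Ce ^ 2 * ‖v‖ ^ 2 := by
    rw [← mul_pow]; exact pow_le_pow_left₀ (norm_nonneg _) (hCe v) 2
  rw [S.bmu_self_eq]
  nlinarith [S.norm_sq_eq v, S.integral_norm_sq_nonneg (S.val v),
    mul_nonneg (sq_nonneg cs) (S.integral_norm_sq_nonneg fun t => S.R (S.dt v t))]

include hint in
lemma abs_bmu_le {Ce : ℝ} (hCe : ∀ w, ‖S.initialValue w‖ ≤ Ce * ‖w‖) (v w : W) :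
    |S.bmu A' v w| ≤ (2 + 2 * cs ^ 2 + Ce ^ 2) * ‖v‖ * ‖w‖ :=
  (S.bmuForm A' hint).abs_apply_le_of_apply_self_le (S.bmu_self_nonneg A')
    (S.bmuForm_isSymm hint) (by positivity) (S.bmu_self_le hint hA hCe) v w

end Continuity

section Coercivity

variable (hcc : 0 ≤ cc) (hcoer : ∀ u, cc * ‖u‖ ^ 2 ≤ A' u u)
include hcc hcoer

lemma sq_mul_norm_val_sq_add_le_norm_residual_sq (v : W) (t : ℝ) :
    cc ^ 2 * ‖S.val v t‖ ^ 2 + 2 * cc * S.dt v t (S.val v t) ≤ ‖S.residual A' v t‖ ^ 2 := by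
  set x := S.val v t
  have hpair : ⟪S.residual A' v t, x⟫ = S.dt v t x + A' x x := (S.riesz _ x).symm
  have hsq := sq_nonneg ‖S.residual A' v t - cc • x‖
  rw [norm_sub_sq_real, real_inner_smul_right, norm_smul, Real.norm_of_nonneg hcc, hpair] at hsq
  nlinarith [mul_le_mul_of_nonneg_left (hcoer x) hcc]

include hint in
lemma sq_mul_integral_norm_val_sq_le (v : W) :
    cc ^ 2 * ∫ t in (0:ℝ)..S.T, ‖S.val v t‖ ^ 2 ≤
      (∫ t in (0:ℝ)..S.T, ‖S.residual A' v t‖ ^ 2) + cc * ‖S.initialValue v‖ ^ 2 := by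
  have henergy := intervalIntegral.const_mul_add_const_mul_le_integral S.T_pos.le
    (S.intervalIntegrable_norm_residual_sq hint v) (S.intervalIntegrable_norm_val_sq v)
    (S.int_mix v v) fun t _ => S.sq_mul_norm_val_sq_add_le_norm_residual_sq hcc hcoer v t
  have hftc : ‖S.ι (S.val v S.T)‖ ^ 2 - ‖S.initialValue v‖ ^ 2 =
      2 * ∫ t in (0:ℝ)..S.T, S.dt v t (S.val v t) := S.ftc v
  nlinarith [mul_nonneg hcc (sq_nonneg ‖S.ι (S.val v S.T)‖)]

include hint in
lemma mul_norm_sq_le_bmu_self (hA : ‖A'‖ ≤ cs) (v : W) :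
    cc ^ 2 / (2 * cc ^ 2 + (2 * cs ^ 2 + 1) * (1 + cc)) * ‖v‖ ^ 2 ≤ S.bmu A' v v := by
  rw [div_mul_eq_mul_div, div_le_iff₀ (by positivity), S.bmu_self_eq]
  set I := ∫ t in (0:ℝ)..S.T, ‖S.residual A' v t‖ ^ 2
  set X := ∫ t in (0:ℝ)..S.T, ‖S.val v t‖ ^ 2
  set E := ‖S.initialValue v‖ ^ 2
  have hI : 0 ≤ I := S.integral_norm_sq_nonneg _
  have hE : 0 ≤ E := sq_nonneg _
  calc cc ^ 2 * ‖v‖ ^ 2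
      ≤ cc ^ 2 * (2 * I + (2 * cs ^ 2 + 1) * X) :=
        mul_le_mul_of_nonneg_left (S.norm_sq_le_integral_residual hint hA v) (sq_nonneg cc)
    _ = 2 * cc ^ 2 * I + (2 * cs ^ 2 + 1) * (cc ^ 2 * X) := by ring
    _ ≤ 2 * cc ^ 2 * I + (2 * cs ^ 2 + 1) * (I + cc * E) := by
        gcongr; exact S.sq_mul_integral_norm_val_sq_le hint hcc hcoer v
    _ ≤ (I + E) * (2 * cc ^ 2 + (2 * cs ^ 2 + 1) * (1 + cc)) := by
        nlinarith [mul_nonneg (sq_nonneg cc) hE, mul_nonneg hcc hI,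
          mul_nonneg (sq_nonneg cs) (mul_nonneg hcc hI), mul_nonneg (sq_nonneg cs) hE]

end Coercivity

end SpaceTimeSetup

theorem bmu_uniformly_bounded_coercive_general (S : SpaceTimeSetup V H W)
    {P : Type*} (a : P → V →ₗ[ℝ] V →ₗ[ℝ] ℝ)
    (Amu : P → V →L[ℝ] StrongDual ℝ V)
    (hAa : ∀ (μ : P) (u v : V), Amu μ u v = a μ u v)
    (cs cc : ℝ) (hcs : 0 < cs) (hcc : 0 < cc)
    (hbound : ∀ (μ : P) (u v : V), |a μ u v| ≤ cs * ‖u‖ * ‖v‖)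
    (hcoer : ∀ (μ : P) (u : V), cc * ‖u‖ ^ 2 ≤ a μ u u)
    (hint : ∀ (μ : P) (u w : W), IntervalIntegrable
      (fun t => ⟪S.R (S.dt u t + Amu μ (S.val u t)),
        S.R (S.dt w t + Amu μ (S.val w t))⟫) volume 0 S.T) :
    (∃ Cb > 0, ∀ (μ : P) (v w : W), |S.bmu (Amu μ) v w| ≤ Cb * ‖v‖ * ‖w‖) ∧
    (∃ Cc > 0, ∀ (μ : P) (v : W), Cc * ‖v‖ ^ 2 ≤ S.bmu (Amu μ) v v) := by
  obtain ⟨Ce, -, hemb⟩ := S.emb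
  have hCe (w : W) : ‖S.initialValue w‖ ≤ Ce * ‖w‖ := hemb w 0 ⟨le_rfl, S.T_pos.le⟩
  have hA (μ : P) : ‖Amu μ‖ ≤ cs :=
    (Amu μ).opNorm_le_bound₂ hcs.le fun u v => by rw [hAa, Real.norm_eq_abs]; exact hbound μ u v
  have hcoerA (μ : P) (u : V) : cc * ‖u‖ ^ 2 ≤ Amu μ u u := hAa μ u u ▸ hcoer μ u
  exact ⟨⟨_, by positivity, fun μ v w => S.abs_bmu_le (hint μ) (hA μ) hCe v w⟩,
    ⟨_, by positivity, fun μ v => S.mul_norm_sq_le_bmu_self (hint μ) hcc.le (hcoerA μ) (hA μ) v⟩⟩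

/-- for the family of operators `A(μ) : V → V*` associated
with the uniformly continuous and uniformly coercive family of inner products
`a(μ;·,·)` via `a(μ;u,v) = ⟨A(μ)u, v⟩_{V*,V}`, the parameter-dependent
bilinear form `b(μ;·,·)` is uniformly continuous and uniformly coercive on
`W(0,T)` with respect to `μ`. -/
theorem bmu_uniformly_bounded_coercive (S : SpaceTimeSetup V H W)
    {P : Type*} (a : P → V →ₗ[ℝ] V →ₗ[ℝ] ℝ)
    (Amu : P → V →L[ℝ] StrongDual ℝ V)
    (hAa : ∀ (μ : P) (u v : V), Amu μ u v = a μ u v)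
    (hsymm : ∀ (μ : P) (u v : V), a μ u v = a μ v u)
    (cs cc : ℝ) (hcs : 0 < cs) (hcc : 0 < cc)
    (hbound : ∀ (μ : P) (u v : V), |a μ u v| ≤ cs * ‖u‖ * ‖v‖)
    (hcoer : ∀ (μ : P) (u : V), cc * ‖u‖ ^ 2 ≤ a μ u u)
    (hint : ∀ (μ : P) (u w : W), IntervalIntegrable
      (fun t => ⟪S.R (S.dt u t + Amu μ (S.val u t)),
        S.R (S.dt w t + Amu μ (S.val w t))⟫) volume 0 S.T) :
    (∃ Cb > 0, ∀ (μ : P) (v w : W), |S.bmu (Amu μ) v w| ≤ Cb * ‖v‖ * ‖w‖) ∧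
    (∃ Cc > 0, ∀ (μ : P) (v : W), Cc * ‖v‖ ^ 2 ≤ S.bmu (Amu μ) v v) :=
  bmu_uniformly_bounded_coercive_general S a Amu hAa cs cc hcs hcc hbound hcoer hint
end
end

section
/- For space-time separable functions y_d(t,x) = χ(t)φ(x) and v_d(t,x) = ξ(t)ψ(x) in W(0,T), with φ,ψ ∈ V and χ,ξ sufficiently smooth scalar functions on [0,T], the bilinear form admits the representation b(y_d, v_d) = χ(T)ξ(T)(φ,ψ)_H + ∫₀ᵀ χ̇(t)ξ̇(t) dt · (φ, Rψ)_H + ∫₀ᵀ χ(t)ξ(t) dt · (φ,ψ)_V. -/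
/-!
Abstract setup for the least-squares space-time formulation of the abstract
parabolic (heat) equation, following Hinze–Kahle.

* `V, H` are separable real Hilbert spaces forming a Gelfand triple
  `V ↪ H ≡ H* ↪ V*` via the embedding `ι : V →L[ℝ] H`.
* `A : V → V*` is linear, bounded, selfadjoint, coercive and boundedly
  invertible with inverse the Riesz lift `R : V* → V`, i.e.
  `⟨l,v⟩_{V*,V} = (R l, v)_V`.  The dual inner product is
  `(l,k)_{V*} = (R l, R k)_V`.
* `W` is the space `W(0,T) = {v ∈ L²(0,T;V) : vₜ ∈ L²(0,T;V*)}`; an element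
  `w : W` has an `L²(0,T;V)`-representative `val w : ℝ → V` (whose composition
  with `ι` is the continuous `H`-valued representative) and a weak time
  derivative `dt w : ℝ → V*`.  The `W(0,T)`-inner product is
  `(u,w) = ∫₀ᵀ (uₜ,wₜ)_{V*} + ∫₀ᵀ (u,w)_V`, the embedding
  `W(0,T) ↪ C([0,T];H)` is continuous, and the fundamental
  integration-by-parts identity
  `‖w(T)‖²_H - ‖w(0)‖²_H = 2∫₀ᵀ ⟨wₜ,w⟩` holds.
-/

open MeasureTheory
open scoped RealInnerProductSpace

noncomputable section

variable {V H W : Type*}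
    [NormedAddCommGroup V] [InnerProductSpace ℝ V] [CompleteSpace V]
    [NormedAddCommGroup H] [InnerProductSpace ℝ H] [CompleteSpace H]
    [NormedAddCommGroup W] [InnerProductSpace ℝ W] [CompleteSpace W]

/-!
The integrand of `b` is `(χ̇ jφ + A(χ φ), ξ̇ jψ + A(ξ ψ))_{V*}`. Since `R A = id` and `R jφ`
represents `(φ, ·)_H` in `V`, it expands pointwise into
`χ̇ξ̇ (φ, Rψ)_H + (χ̇ξ + χξ̇) (φ,ψ)_H + χξ (φ,ψ)_V`. The mixed term is the derivative of
`χξ (φ,ψ)_H`, so its integral is `χ(T)ξ(T)(φ,ψ)_H - χ(0)ξ(0)(φ,ψ)_H`, and the subtracted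
part cancels the initial-value term of `b`.
-/

namespace SpaceTimeSetup

variable (S : SpaceTimeSetup V H W)

theorem inner_R_of_apply_eq {φ : V} {j : StrongDual ℝ V}
    (hj : ∀ w : V, j w = ⟪S.ι φ, S.ι w⟫) (v : V) : ⟪S.R j, v⟫ = ⟪S.ι φ, S.ι v⟫ := by
  rw [← S.riesz, hj]

theorem inner_R_smul_add_A_smul {φ ψ : V} {jφ jψ : StrongDual ℝ V}
    (hjφ : ∀ w : V, jφ w = ⟪S.ι φ, S.ι w⟫) (hjψ : ∀ w : V, jψ w = ⟪S.ι ψ, S.ι w⟫)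
    (a b c d : ℝ) :
    ⟪S.R (a • jφ + S.A (b • φ)), S.R (c • jψ + S.A (d • ψ))⟫ =
      a * c * ⟪S.ι φ, S.ι (S.R jψ)⟫ + (a * d + b * c) * ⟪S.ι φ, S.ι ψ⟫ + b * d * ⟪φ, ψ⟫ := by
  have hφψ : ⟪φ, S.R jψ⟫ = ⟪S.ι φ, S.ι ψ⟫ := by
    rw [real_inner_comm, S.inner_R_of_apply_eq hjψ, real_inner_comm]
  simp only [map_add, _root_.map_smul, S.R_A, inner_add_left, inner_add_right,
    real_inner_smul_left, real_inner_smul_right, S.inner_R_of_apply_eq hjφ, hφψ]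
  ring

end SpaceTimeSetup

open intervalIntegral in
/-- The weak time derivatives `χ̇ φ`, `ξ̇ ψ` enter as `χd • jφ`, `ξd • jψ`, where `jφ, jψ ∈ V*`
are `φ, ψ` seen in `V*` through the Gelfand triple: `⟨jφ, w⟩ = (φ, w)_H`. -/
theorem b_separable_representation_general (S : SpaceTimeSetup V H W)
    (φ ψ : V) (χ ξ χd ξd : ℝ → ℝ)
    (hχ : ∀ t, HasDerivAt χ (χd t) t) (hξ : ∀ t, HasDerivAt ξ (ξd t) t)
    (hχdc : Continuous χd) (hξdc : Continuous ξd)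
    (jφ jψ : StrongDual ℝ V)
    (hjφ : ∀ w : V, jφ w = ⟪S.ι φ, S.ι w⟫)
    (hjψ : ∀ w : V, jψ w = ⟪S.ι ψ, S.ι w⟫)
    (yd vd : W)
    (hyval : ∀ t, S.val yd t = χ t • φ) (hydt : ∀ t, S.dt yd t = χd t • jφ)
    (hvval : ∀ t, S.val vd t = ξ t • ψ) (hvdt : ∀ t, S.dt vd t = ξd t • jψ) :
    S.b yd vd = χ S.T * ξ S.T * ⟪S.ι φ, S.ι ψ⟫ +
      (∫ t in (0:ℝ)..S.T, χd t * ξd t) * ⟪S.ι φ, S.ι (S.R jψ)⟫ +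
      (∫ t in (0:ℝ)..S.T, χ t * ξ t) * ⟪φ, ψ⟫ := by
  have hχc : Continuous χ := continuous_iff_continuousAt.2 fun t => (hχ t).continuousAt
  have hξc : Continuous ξ := continuous_iff_continuousAt.2 fun t => (hξ t).continuousAt
  have hmixed : ∫ t in (0:ℝ)..S.T, χd t * ξ t + χ t * ξd t = χ S.T * ξ S.T - χ 0 * ξ 0 :=
    integral_deriv_mul_eq_sub (fun t _ => hχ t) (fun t _ => hξ t)
      (hχdc.intervalIntegrable _ _) (hξdc.intervalIntegrable _ _)
  have hintegrand (t : ℝ) : ⟪S.R (S.dt yd t + S.A (S.val yd t)),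
      S.R (S.dt vd t + S.A (S.val vd t))⟫ =
        χd t * ξd t * ⟪S.ι φ, S.ι (S.R jψ)⟫ + (χd t * ξ t + χ t * ξd t) * ⟪S.ι φ, S.ι ψ⟫ +
          χ t * ξ t * ⟪φ, ψ⟫ := by
    rw [hyval, hydt, hvval, hvdt, S.inner_R_smul_add_A_smul hjφ hjψ]
  rw [SpaceTimeSetup.b, integral_congr fun t _ => hintegrand t,
    integral_add ((by fun_prop : Continuous _).intervalIntegrable _ _)
      ((by fun_prop : Continuous _).intervalIntegrable _ _),
    integral_add ((by fun_prop : Continuous _).intervalIntegrable _ _)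
      ((by fun_prop : Continuous _).intervalIntegrable _ _),
    intervalIntegral.integral_mul_const, intervalIntegral.integral_mul_const,
    intervalIntegral.integral_mul_const, hmixed, hyval, hvval,
    _root_.map_smul, _root_.map_smul, real_inner_smul_left, real_inner_smul_right]
  ring

/-- for space-time separable functions
`y_d(t) = χ(t) φ` and `v_d(t) = ξ(t) ψ` in `W(0,T)` (with `φ, ψ ∈ V` and
`χ, ξ` smooth scalar functions, so that the weak time derivatives are
`χ̇(t) φ` resp. `ξ̇(t) ψ`, regarded as elements of `V*` through the Gelfand
triple embedding `⟨φ, ·⟩ = (φ, ·)_H`), the bilinear form satisfies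
`b(y_d, v_d) = χ(T) ξ(T) (φ,ψ)_H + (∫₀ᵀ χ̇ ξ̇) (φ, R ψ)_H + (∫₀ᵀ χ ξ) (φ,ψ)_V`. -/
theorem b_separable_representation (S : SpaceTimeSetup V H W)
    (φ ψ : V) (χ ξ χd ξd : ℝ → ℝ)
    (hχ : ∀ t, HasDerivAt χ (χd t) t) (hξ : ∀ t, HasDerivAt ξ (ξd t) t)
    (hχc : Continuous χ) (hξc : Continuous ξ)
    (hχdc : Continuous χd) (hξdc : Continuous ξd)
    (jφ jψ : StrongDual ℝ V)
    (hjφ : ∀ w : V, jφ w = ⟪S.ι φ, S.ι w⟫)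
    (hjψ : ∀ w : V, jψ w = ⟪S.ι ψ, S.ι w⟫)
    (yd vd : W)
    (hyval : ∀ t, S.val yd t = χ t • φ) (hydt : ∀ t, S.dt yd t = χd t • jφ)
    (hvval : ∀ t, S.val vd t = ξ t • ψ) (hvdt : ∀ t, S.dt vd t = ξd t • jψ) :
    S.b yd vd = χ S.T * ξ S.T * ⟪S.ι φ, S.ι ψ⟫ +
      (∫ t in (0:ℝ)..S.T, χd t * ξd t) * ⟪S.ι φ, S.ι (S.R jψ)⟫ +
      (∫ t in (0:ℝ)..S.T, χ t * ξ t) * ⟪φ, ψ⟫ :=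
  b_separable_representation_general S φ ψ χ ξ χd ξd hχ hξ hχdc hξdc jφ jψ hjφ hjψ yd vd hyval hydt
    hvval hvdt
end
end
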